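/- A planar polygonal arc starting on a line L, with all turn angles of one sign and total turning at most π, lies entirely in one closed half-plane determined by L until it ends; in particular, a polygonal chain with total absolute turning ≤ π cannot cross a line through its initial segment twice (cannot return across the extension of its starting edge). -/

import Mathlib

/-!
Rotate the plane so that the first edge points along the positive real axis. The imaginary
part of the rotated edge `i` is `‖edge i‖ · sin (θ i - θ₀)`, and monotonicity of `θ` together
with the total turning bound puts every `θ i - θ₀` in `[0, π]` (or every one in `[-π, 0]`).
So all edges point into the same closed half-plane, and their partial sums, the vertices,
stay there.
-/

open Complex

theorem im_ofReal_mul_exp_mul_exp_neg (r θ α : ℝ) :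
    ((r : ℂ) * exp (θ * I) * exp (-α * I)).im = r * Real.sin (θ - α) := by
  rw [mul_assoc, ← exp_add, show (θ : ℂ) * I + -α * I = ((θ - α : ℝ) : ℂ) * I by push_cast; ring,
    im_ofReal_mul, exp_ofReal_mul_I_im]

theorem im_sub_mul_nonneg_of_forall_edge {m : ℕ} (p : Fin (m + 1) → ℂ) (w : ℂ)
    (hedge : ∀ i : Fin m, 0 ≤ ((p i.succ - p i.castSucc) * w).im) (i : Fin (m + 1)) :
    0 ≤ ((p i - p 0) * w).im := by
  induction i using Fin.induction with
  | zero => simp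
  | succ i ih =>
    rw [← sub_add_sub_cancel (p i.succ) (p i.castSucc) (p 0), add_mul, add_im]
    exact add_nonneg (hedge i) ih

theorem Monotone.sin_sub_nonneg {ι : Type*} [Preorder ι] {θ : ι → ℝ} (hθ : Monotone θ)
    {a b i : ι} (hai : a ≤ i) (hib : i ≤ b) (hπ : θ b - θ a ≤ Real.pi) :
    0 ≤ Real.sin (θ i - θ a) :=
  Real.sin_nonneg_of_nonneg_of_le_pi (sub_nonneg.2 (hθ hai)) (by linarith [hθ hib])

/-- A planar polygonal arc starting on a line `L` (the line through its first
edge), with all turn angles of one sign (the lifted edge directions `θ` are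
monotone or antitone) and total turning at most `π` in absolute value, lies
entirely in one closed half-plane determined by `L`: all its vertices `p i`
satisfy `im((p i - p 0) · e^{-θ₀ i}) ≥ 0`, or all satisfy `≤ 0`. In particular
such a chain cannot return across the extension of its starting edge. -/
theorem stmt7 (m : ℕ) (hm : 1 ≤ m) (p : Fin (m + 1) → ℂ) (θ : Fin m → ℝ)
    (hedge : ∀ i : Fin m,
      p i.succ - p i.castSucc = ((‖p i.succ - p i.castSucc‖ : ℝ) : ℂ) *
        Complex.exp ((θ i : ℂ) * Complex.I))
    (hone : Monotone θ ∨ Antitone θ)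
    (hturn : |θ ⟨m - 1, by omega⟩ - θ ⟨0, by omega⟩| ≤ Real.pi) :
    (∀ i : Fin (m + 1),
        0 ≤ ((p i - p 0) * Complex.exp (-(θ ⟨0, by omega⟩ : ℂ) * Complex.I)).im) ∨
    (∀ i : Fin (m + 1),
        ((p i - p 0) * Complex.exp (-(θ ⟨0, by omega⟩ : ℂ) * Complex.I)).im ≤ 0) := by
  set a : Fin m := ⟨0, by omega⟩
  set b : Fin m := ⟨m - 1, by omega⟩
  have ha (i : Fin m) : a ≤ i := Fin.le_def.2 (Nat.zero_le _)
  have hb (i : Fin m) : i ≤ b := Fin.le_def.2 (show i.1 ≤ m - 1 by omega)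
  have hrot (i : Fin m) : ((p i.succ - p i.castSucc) * exp (-(θ a : ℂ) * I)).im =
      ‖p i.succ - p i.castSucc‖ * Real.sin (θ i - θ a) := by
    rw [hedge i, im_ofReal_mul_exp_mul_exp_neg, ← hedge i]
  rcases hone with hθ | hθ
  · refine .inl (im_sub_mul_nonneg_of_forall_edge p _ fun i => ?_)
    rw [hrot]
    exact mul_nonneg (norm_nonneg _) (hθ.sin_sub_nonneg (ha i) (hb i) (le_of_abs_le hturn))
  · refine .inr fun i => neg_nonneg.1 ?_
    rw [← neg_im, ← mul_neg]
    refine im_sub_mul_nonneg_of_forall_edge p _ (fun i => ?_) i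
    have hsin : 0 ≤ Real.sin (θ a - θ i) := by
      simpa only [neg_sub_neg] using
        hθ.neg.sin_sub_nonneg (ha i) (hb i) (by linarith [neg_le_of_abs_le hturn])
    rw [mul_neg, neg_im, hrot, ← mul_neg, ← Real.sin_neg, neg_sub]
    exact mul_nonneg (norm_nonneg _) hsin
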